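/- Let R be a commutative Noetherian ring of prime characteristic p and let I, J be ideals of R. If I^{[q]} ⊆ J^{[q]} for some q = p^e and the Frobenius map on R is injective (i.e., R is reduced) and flat, then I ⊆ J. -/

import Mathlib

/-!
If `x^q ∈ J^[q]`, then `1` lies in the colon ideal `(J^[q] : x^q)`. Since the `q`-th power
Frobenius `F` is flat, extension along `F` commutes with colon ideals, so
`1 ∈ (J : x)^[q] ⊆ (J : x)`, that is, `x ∈ J`.
-/

theorem RingHom.Flat.colon_map_le_map_colon {R S : Type*} [CommRing R] [CommRing S]
    {f : R →+* S} (hf : f.Flat) (J : Ideal R) (x : R) :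
    (J.map f).colon {f x} ≤ (J.colon {x}).map f := by
  algebraize [f]
  intro s hsx
  rw [Submodule.mem_colon_singleton, smul_eq_mul] at hsx
  obtain ⟨n, r, g, hsum⟩ := Submodule.mem_span_set'.mp hsx
  choose a haJ hag using fun i => (g i).2
  -- By the equational criterion, the relation `x • s = ∑ a i • r i` factors through a free
  -- module; the factor of `x` has entries in `J : x`, and it carries `s` into `(J : x) S`.
  have hrel : ∑ i, Matrix.vecCons x a i • Matrix.vecCons s (-r) i = 0 := by
    simp only [smul_eq_mul] at hsum
    simp only [Fin.sum_univ_succ, Matrix.cons_val_zero, Matrix.cons_val_succ, Pi.neg_apply,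
      Algebra.smul_def, RingHom.algebraMap_toAlgebra, hag, mul_neg, Finset.sum_neg_distrib]
    simp only [mul_comm (g _ : S), hsum]
    ring
  obtain ⟨k, c, y, hs, hc⟩ :=
    Module.Flat.isTrivialRelation_of_sum_smul_eq_zero (R := R) (M := S) hrel
  have hc0 : ∀ j, c 0 j ∈ J.colon {x} := by
    intro j
    have hcj := hc j
    simp only [Fin.sum_univ_succ, Matrix.cons_val_zero, Matrix.cons_val_succ] at hcj
    rw [Submodule.mem_colon_singleton, smul_eq_mul, mul_comm, eq_neg_of_add_eq_zero_left hcj]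
    exact neg_mem (Ideal.sum_mem _ fun i _ => Ideal.mul_mem_right _ _ (haJ i))
  have hs0 : s = ∑ j, f (c 0 j) * y j := by
    simpa [Algebra.smul_def, RingHom.algebraMap_toAlgebra] using hs 0
  rw [hs0]
  exact Ideal.sum_mem _ fun j _ => Ideal.mul_mem_right _ _ (Ideal.mem_map_of_mem f (hc0 j))

theorem RingHom.Flat.iterateFrobenius {R : Type*} [CommRing R] {p : ℕ} [ExpChar R p]
    (hflat : (frobenius R p).Flat) (n : ℕ) : (iterateFrobenius R p n).Flat := by
  induction n with
  | zero => simpa using RingHom.Flat.id R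
  | succ n ih =>
    rw [iterateFrobenius_add, iterateFrobenius_one]
    exact hflat.comp ih

theorem Ideal.map_iterateFrobenius_le {R : Type*} [CommRing R] (p : ℕ) [ExpChar R p]
    (K : Ideal R) (n : ℕ) : K.map (iterateFrobenius R p n) ≤ K :=
  Ideal.map_le_iff_le_comap.mpr fun _ hy => K.pow_mem_of_mem hy _ (pow_pos (expChar_pos R p) n)

theorem le_of_frobeniusPower_le_general {R : Type*} [CommRing R] (p : ℕ)
    [Fact p.Prime] [CharP R p]
    (hflat : (frobenius R p).Flat)
    (I J : Ideal R) (e : ℕ)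
    (h : Ideal.span ((fun x => x ^ p ^ e) '' (I : Set R)) ≤
      Ideal.span ((fun x => x ^ p ^ e) '' (J : Set R))) :
    I ≤ J := by
  intro x hx
  set F := iterateFrobenius R p e
  have hFx : F x ∈ J.map F := h (Ideal.subset_span ⟨x, hx, rfl⟩)
  have hone : 1 ∈ (J.colon {x}).map F :=
    (hflat.iterateFrobenius e).colon_map_le_map_colon J x (by simpa using hFx)
  simpa using J.colon {x} |>.map_iterateFrobenius_le p e hone

/-- Frobenius descent: if `R` is Noetherian of prime characteristic `p` with injective and flat
Frobenius, and `I^{[q]} ⊆ J^{[q]}` for some `q = p^e`, then `I ⊆ J`. -/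
theorem le_of_frobeniusPower_le {R : Type*} [CommRing R] [IsNoetherianRing R] (p : ℕ)
    [Fact p.Prime] [CharP R p]
    (hinj : Function.Injective (frobenius R p)) (hflat : (frobenius R p).Flat)
    (I J : Ideal R) (e : ℕ)
    (h : Ideal.span ((fun x => x ^ p ^ e) '' (I : Set R)) ≤
      Ideal.span ((fun x => x ^ p ^ e) '' (J : Set R))) :
    I ≤ J :=
  le_of_frobeniusPower_le_general p hflat I J e h
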